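/- Let G be an m-distance-regular graph and let x, y be vertices at m-distance a = (a_1,...,a_m). Then for every b = (b_1,...,b_m) ∈ ℕ^m with b_i ≤ a_i for all i, there exists a vertex z with d_m(x,z) = b and d_m(z,y) = a − b. -/

import Mathlib

/-- A walk in an edge-colored graph: `CWalk Γ x y cs` means there is a walk from
`x` to `y` whose successive edges have the colors listed in `cs`. -/
inductive CWalk {m : ℕ} {X : Type*} (Γ : Fin m → X → X → Prop) : X → X → List (Fin m) → Prop
  | nil (x : X) : CWalk Γ x x []
  | cons {x y z : X} {i : Fin m} {cs : List (Fin m)} :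
      Γ i x y → CWalk Γ y z cs → CWalk Γ x z (i :: cs)

/-- The `m`-length of a walk type: the vector counting edges of each color. -/
def mlen {m : ℕ} (cs : List (Fin m)) : Fin m → ℕ := fun i => cs.count i

/-- The set of `m`-lengths of walks between `x` and `y`. -/
def walkLengths {m : ℕ} {X : Type*} (Γ : Fin m → X → X → Prop) (x y : X) :
    Set (Fin m → ℕ) := {ℓ | ∃ cs, CWalk Γ x y cs ∧ mlen cs = ℓ}


/-- The `i`-th standard basis tuple `e_i` of `ℕ^m`. -/
def eVec {m : ℕ} (i : Fin m) : Fin m → ℕ := Pi.single i 1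

section Aux

variable {m : ℕ} {X : Type*}

theorem CWalk.append {Γ : Fin m → X → X → Prop} {x y z : X} {cs ds : List (Fin m)}
    (h1 : CWalk Γ x y cs) (h2 : CWalk Γ y z ds) : CWalk Γ x z (cs ++ ds) := by
  induction h1 with
  | nil => exact h2
  | cons h _ ih => exact .cons h (ih h2)

theorem CWalk.reverse {Γ : Fin m → X → X → Prop}
    (hsymmG : ∀ i (x y : X), Γ i x y → Γ i y x)
    {x y : X} {cs : List (Fin m)} (h : CWalk Γ x y cs) : CWalk Γ y x cs.reverse := by
  induction h with
  | nil => exact .nil _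
  | cons h _ ih =>
      simpa using ih.append (.cons (hsymmG _ _ _ h) (.nil _))

theorem CWalk.split {Γ : Fin m → X → X → Prop} :
    ∀ {cs : List (Fin m)} {x y : X} {ds : List (Fin m)},
      CWalk Γ x y (cs ++ ds) → ∃ z, CWalk Γ x z cs ∧ CWalk Γ z y ds := by
  intro cs
  induction cs with
  | nil => exact fun h => ⟨_, .nil _, h⟩
  | cons i t ih =>
      intro x y ds h
      cases h with
      | cons he hw =>
          obtain ⟨z, h1, h2⟩ := ih hw
          exact ⟨z, .cons he h1, h2⟩

theorem mlen_append (cs ds : List (Fin m)) : mlen (cs ++ ds) = mlen cs + mlen ds := by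
  funext j; simp [mlen]

theorem mlen_reverse (cs : List (Fin m)) : mlen cs.reverse = mlen cs := by
  funext j; simp [mlen]

theorem mlen_perm {cs ds : List (Fin m)} (h : cs.Perm ds) : mlen cs = mlen ds := by
  funext j; exact h.count_eq j

theorem mlen_single (i : Fin m) : mlen [i] = eVec i := by
  funext j
  simp [mlen, eVec, List.count_singleton, Pi.single_apply]
  by_cases h : j = i <;> simp [h]
  exact fun h' => absurd h'.symm h

theorem mlen_eq_single {cs : List (Fin m)} {i : Fin m} (h : mlen cs = eVec i) :
    cs = [i] := by
  have hc : ∀ j, cs.count j = (if j = i then 1 else 0) := by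
    intro j
    have := congrFun h j
    simpa [mlen, eVec, Pi.single_apply] using this
  cases cs with
  | nil => have := hc i; simp at this
  | cons c t =>
      have hci : c = i := by
        by_contra hne
        have := hc c
        simp [List.count_cons, hne] at this
      subst hci
      have h1 : t.count c = 0 := by
        have := hc c
        simpa [List.count_cons] using this
      have ht : t = [] := by
        cases t with
        | nil => rfl
        | cons c' t' =>
            by_cases hcc : c' = c
            · subst hcc; simp [List.count_cons] at h1
            · have := hc c'
              simp [List.count_cons, hcc] at this
      rw [ht]

variable [Fintype X] [DecidableEq X]
variable {Γ : Fin m → X → X → Prop}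
variable {le : (Fin m → ℕ) → (Fin m → ℕ) → Prop}
variable {d : X → X → (Fin m → ℕ)}

theorem walk_single {x y : X} {i : Fin m} (h : CWalk Γ x y [i]) : Γ i x y := by
  cases h with
  | cons he hw => cases hw; exact he

theorem edge_of_d_eVec
    (hd : ∀ x y, d x y ∈ walkLengths Γ x y ∧ ∀ ℓ ∈ walkLengths Γ x y, le (d x y) ℓ)
    {x y : X} {i : Fin m} (h : d x y = eVec i) : Γ i x y := by
  obtain ⟨cs, hw, hl⟩ := (hd x y).1
  have : cs = [i] := mlen_eq_single (by rw [hl, h])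
  subst this
  exact walk_single hw

theorem d_symm
    (hsymmG : ∀ i (x y : X), Γ i x y → Γ i y x)
    (hantisymm : ∀ a b, le a b → le b a → a = b)
    (hd : ∀ x y, d x y ∈ walkLengths Γ x y ∧ ∀ ℓ ∈ walkLengths Γ x y, le (d x y) ℓ)
    (x y : X) : d x y = d y x := by
  obtain ⟨cs, hw, hl⟩ := (hd x y).1
  obtain ⟨ds, hw', hl'⟩ := (hd y x).1
  refine hantisymm _ _ ?_ ?_
  · exact (hd x y).2 _ ⟨ds.reverse, hw'.reverse hsymmG, by rw [mlen_reverse, hl']⟩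
  · exact (hd y x).2 _ ⟨cs.reverse, hw.reverse hsymmG, by rw [mlen_reverse, hl]⟩

theorem geo_split
    (hantisymm : ∀ a b, le a b → le b a → a = b)
    (htrans : ∀ a b c, le a b → le b c → le a c)
    (hadd : ∀ u v w : Fin m → ℕ, le u v → le (w + u) (w + v))
    (hd : ∀ x y, d x y ∈ walkLengths Γ x y ∧ ∀ ℓ ∈ walkLengths Γ x y, le (d x y) ℓ)
    {x u y : X} {cs1 cs2 : List (Fin m)}
    (h1 : CWalk Γ x u cs1) (h2 : CWalk Γ u y cs2)
    (hg : mlen (cs1 ++ cs2) = d x y) :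
    d x u = mlen cs1 ∧ d u y = mlen cs2 := by
  have hmin1 : le (d x u) (mlen cs1) := (hd x u).2 _ ⟨cs1, h1, rfl⟩
  have hmin2 : le (d u y) (mlen cs2) := (hd u y).2 _ ⟨cs2, h2, rfl⟩
  obtain ⟨p1, hp1, hl1⟩ := (hd x u).1
  obtain ⟨p2, hp2, hl2⟩ := (hd u y).1
  have tri : le (d x y) (d x u + d u y) :=
    (hd x y).2 _ ⟨p1 ++ p2, hp1.append hp2, by rw [mlen_append, hl1, hl2]⟩
  have htot : mlen cs1 + mlen cs2 = d x y := by rw [← mlen_append, hg]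
  have h3 : le (d x u + d u y) (mlen cs1 + d u y) := by
    have := hadd _ _ (d u y) hmin1
    rwa [add_comm (d u y), add_comm (d u y)] at this
  have h4 : le (mlen cs1 + d u y) (mlen cs1 + mlen cs2) := hadd _ _ _ hmin2
  have hs : le (d x u + d u y) (d x y) := htot ▸ htrans _ _ _ h3 h4
  have heq : d x y = d x u + d u y := hantisymm _ _ tri hs
  have e1 : d x u + d u y = mlen cs1 + mlen cs2 := by rw [← heq, ← htot]
  have h4' : le (mlen cs1 + d u y) (d x u + d u y) := e1 ▸ h4
  have e2 : d x u + d u y = mlen cs1 + d u y := hantisymm _ _ h3 h4'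
  have hxu : d x u = mlen cs1 := by
    funext j
    have := congrFun e2 j
    simpa using Nat.add_right_cancel this
  refine ⟨hxu, ?_⟩
  funext j
  have := congrFun e1 j
  simp only [Pi.add_apply] at this
  rw [congrFun hxu j] at this
  exact Nat.add_left_cancel this

theorem swap_exists
    (hsymmG : ∀ i (x y : X), Γ i x y → Γ i y x)
    (hantisymm : ∀ a b, le a b → le b a → a = b)
    (hd : ∀ x y, d x y ∈ walkLengths Γ x y ∧ ∀ ℓ ∈ walkLengths Γ x y, le (d x y) ℓ)
    (p : (Fin m → ℕ) → (Fin m → ℕ) → (Fin m → ℕ) → ℕ)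
    (hp : ∀ a b (x y : X),
      (Finset.univ.filter fun z => d x z = a ∧ d z y = b).card = p a b (d x y))
    {x u v : X} {α β : Fin m → ℕ}
    (h1 : d x u = α) (h2 : d u v = β) : ∃ u', d x u' = β ∧ d u' v = α := by
  have hsym := d_symm hsymmG hantisymm hd
  have c1 : (Finset.univ.filter fun z => d x z = α ∧ d z v = β).card = p α β (d x v) :=
    hp α β x v
  have c2 : (Finset.univ.filter fun z => d x z = β ∧ d z v = α).card = p β α (d x v) :=
    hp β α x v
  have c3 : (Finset.univ.filter fun z => d v z = β ∧ d z x = α).card = p β α (d v x) :=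
    hp β α v x
  have hseteq : (Finset.univ.filter fun z => d v z = β ∧ d z x = α)
      = (Finset.univ.filter fun z => d x z = α ∧ d z v = β) := by
    apply Finset.filter_congr
    intro z _
    rw [hsym v z, hsym z x]
    constructor
    · rintro ⟨h1, h2⟩; exact ⟨h2, h1⟩
    · rintro ⟨h1, h2⟩; exact ⟨h2, h1⟩
  have hcard2 : (Finset.univ.filter fun z => d x z = β ∧ d z v = α).card
      = (Finset.univ.filter fun z => d x z = α ∧ d z v = β).card := by
    rw [c2, hsym x v, ← c3, hseteq]
  have hpos : 0 < (Finset.univ.filter fun z => d x z = α ∧ d z v = β).card :=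
    Finset.card_pos.mpr ⟨u, Finset.mem_filter.mpr ⟨Finset.mem_univ _, h1, h2⟩⟩
  rw [← hcard2] at hpos
  obtain ⟨u', hu'⟩ := Finset.card_pos.mp hpos
  obtain ⟨-, hu1, hu2⟩ := Finset.mem_filter.mp hu'
  exact ⟨u', hu1, hu2⟩

theorem perm_walk
    (hsymmG : ∀ i (x y : X), Γ i x y → Γ i y x)
    (hantisymm : ∀ a b, le a b → le b a → a = b)
    (htrans : ∀ a b c, le a b → le b c → le a c)
    (hadd : ∀ u v w : Fin m → ℕ, le u v → le (w + u) (w + v))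
    (hd : ∀ x y, d x y ∈ walkLengths Γ x y ∧ ∀ ℓ ∈ walkLengths Γ x y, le (d x y) ℓ)
    (p : (Fin m → ℕ) → (Fin m → ℕ) → (Fin m → ℕ) → ℕ)
    (hp : ∀ a b (x y : X),
      (Finset.univ.filter fun z => d x z = a ∧ d z y = b).card = p a b (d x y)) :
    ∀ {cs ds : List (Fin m)}, cs.Perm ds → ∀ {x y : X}, CWalk Γ x y cs →
      mlen cs = d x y → CWalk Γ x y ds := by
  intro cs ds hperm
  induction hperm with
  | nil => exact fun h _ => h
  | cons i h ih =>
      intro x y hw hg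
      cases hw with
      | cons he w =>
          have hsplit := geo_split hantisymm htrans hadd hd
            (CWalk.cons he (CWalk.nil _)) w hg
          exact CWalk.cons he (ih w hsplit.2.symm)
  | swap a b l =>
      intro x y hw hg
      cases hw with
      | cons he1 w1 =>
        cases w1 with
        | cons he2 w2 =>
            rename_i u _ v
            have h1 := geo_split hantisymm htrans hadd hd
              (CWalk.cons he1 (CWalk.nil _)) (CWalk.cons he2 w2) hg
            have h2 := geo_split hantisymm htrans hadd hd
              (CWalk.cons he2 (CWalk.nil _)) w2 h1.2.symm
            obtain ⟨u', hu1, hu2⟩ := swap_exists hsymmG hantisymm hd p hp h1.1 h2.1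
            have he1' : Γ _ x u' := edge_of_d_eVec hd (by rw [hu1, mlen_single])
            have he2' : Γ _ u' v := edge_of_d_eVec hd (by rw [hu2, mlen_single])
            exact CWalk.cons he1' (CWalk.cons he2' w2)
  | trans p1 p2 ih1 ih2 =>
      intro x y hw hg
      exact ih2 (ih1 hw hg) (by rw [← mlen_perm p1, hg])

/-- A list containing `v i` copies of each color `i`. -/
def repList {m : ℕ} (v : Fin m → ℕ) : List (Fin m) :=
  (List.finRange m).flatMap fun i => List.replicate (v i) i

theorem count_repList (v : Fin m → ℕ) (j : Fin m) : (repList v).count j = v j := by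
  rw [repList, List.count_flatMap]
  have : ((List.finRange m).map (List.count j ∘ fun i => List.replicate (v i) i)).sum
      = ∑ i : Fin m, if i = j then v i else 0 := by
    rw [Fin.sum_univ_def]
    congr 1
    apply List.map_congr_left
    intro i _
    simp [List.count_replicate]
  rw [this, Finset.sum_ite_eq' Finset.univ j fun i => v i]
  simp

theorem mlen_repList (v : Fin m → ℕ) : mlen (repList v) = v := by
  funext j; exact count_repList v j

end Aux

/-- In an `m`-distance-regular graph, if `x` and `y` are at `m`-distance `a`, then
for every `b` with `b_i ≤ a_i` coordinatewise there is a vertex `z` with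
`d_m(x,z) = b` and `d_m(z,y) = a - b`. -/
theorem mdistanceRegular_decomposition {m : ℕ} {X : Type*}
    [Fintype X] [DecidableEq X]
    (Γ : Fin m → X → X → Prop)
    (hsymmG : ∀ i (x y : X), Γ i x y → Γ i y x)
    (le : (Fin m → ℕ) → (Fin m → ℕ) → Prop)
    (hrefl : ∀ a, le a a)
    (hantisymm : ∀ a b, le a b → le b a → a = b)
    (htrans : ∀ a b c, le a b → le b c → le a c)
    (htotal : ∀ a b, le a b ∨ le b a)
    (hadd : ∀ u v w : Fin m → ℕ, le u v → le (w + u) (w + v))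
    (hwell : ∀ S : Set (Fin m → ℕ), S.Nonempty → ∃ a ∈ S, ∀ b ∈ S, le a b)
    (d : X → X → (Fin m → ℕ))
    (hd : ∀ x y, d x y ∈ walkLengths Γ x y ∧ ∀ ℓ ∈ walkLengths Γ x y, le (d x y) ℓ)
    (hE : ∀ i : Fin m, ∃ x y : X, d x y = eVec i)
    (p : (Fin m → ℕ) → (Fin m → ℕ) → (Fin m → ℕ) → ℕ)
    (hp : ∀ a b (x y : X),
      (Finset.univ.filter fun z => d x z = a ∧ d z y = b).card = p a b (d x y))
    :
    ∀ (x y : X) (a b : Fin m → ℕ), d x y = a → (∀ i, b i ≤ a i) →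
      ∃ z : X, d x z = b ∧ d z y = a - b := by
  intro x y a b hxy hba
  obtain ⟨cs, hw, hl⟩ := (hd x y).1
  set cs' : List (Fin m) := repList b ++ repList (a - b) with hcs'
  have hperm : cs.Perm cs' := by
    rw [List.perm_iff_count]
    intro j
    have hcj : cs.count j = a j := by
      have := congrFun hl j
      rw [hxy] at this
      exact this
    rw [hcj, hcs', List.count_append, count_repList, count_repList]
    have : (a - b) j = a j - b j := rfl
    rw [this, Nat.add_sub_cancel' (hba j)]
  have hg : mlen cs = d x y := hl
  have hw' : CWalk Γ x y cs' :=
    perm_walk hsymmG hantisymm htrans hadd hd p hp hperm hw hg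
  obtain ⟨z, w1, w2⟩ := hw'.split
  have hg' : mlen (repList b ++ repList (a - b)) = d x y := by
    rw [← hcs', ← mlen_perm hperm, hg]
  have := geo_split hantisymm htrans hadd hd w1 w2 hg'
  rw [mlen_repList, mlen_repList] at this
  exact ⟨z, this.1, this.2⟩
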